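/- arXiv:2409.10323 — 6 statements merged into one kernel-verified Lean document; each statement's English description precedes it below -/
import Mathlib

section
/- For all i ∈ ℕ, the quantity ε⁽ⁱ⁾ := 1 - (3/2)·(1/(2·tan(θᵢ + φᵢ) + tan(θᵢ))) is strictly positive, where θ₁ = arctan(1), φᵢ = (arctan(8) - θ₁)/2ⁱ, and θᵢ₊₁ = θᵢ + φᵢ. -/
open Real

lemma one_le_tan_aux {x : ℝ} (h1 : Real.arctan 1 ≤ x) (h2 : x < π / 2) :
    1 ≤ Real.tan x := by
  have hlo : -(π / 2) < x :=
    lt_of_lt_of_le (Real.neg_pi_div_two_lt_arctan 1) h1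
  have hx : Real.arctan (Real.tan x) = x := Real.arctan_tan hlo h2
  exact Real.arctan_strictMono.le_iff_le.mp (by rw [hx]; exact h1)

theorem stmt_0 (θ : ℕ → ℝ)
    (hθ1 : θ 1 = Real.arctan 1)
    (hrec : ∀ i : ℕ, 1 ≤ i →
      θ (i + 1) = θ i + (Real.arctan 8 - Real.arctan 1) / 2 ^ i) :
    ∀ i : ℕ, 1 ≤ i →
      0 < 1 - (3 / 2) *
        (1 / (2 * Real.tan (θ i + (Real.arctan 8 - Real.arctan 1) / 2 ^ i)
          + Real.tan (θ i))) := by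
  set d : ℝ := Real.arctan 8 - Real.arctan 1 with hd
  have hdpos : 0 < d := by
    have := Real.arctan_strictMono (show (1:ℝ) < 8 by norm_num)
    linarith
  -- closed form
  have hform : ∀ i : ℕ, 1 ≤ i → θ i = Real.arctan 8 - d / 2 ^ (i - 1) := by
    intro i hi
    induction i with
    | zero => omega
    | succ n ih =>
      rcases Nat.eq_or_lt_of_le hi with h | h
      · simp only [← h]
        rw [hθ1]; simp [hd]
      · have hn : 1 ≤ n := by omega
        rw [hrec n hn, ih hn, show n + 1 - 1 = n from rfl]
        have h1 : (2:ℝ) ^ n = 2 * 2 ^ (n - 1) := by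
          rw [← pow_succ']; congr 1; omega
        rw [h1]
        have h2 : (2:ℝ) ^ (n - 1) ≠ 0 := by positivity
        field_simp
        ring
  intro i hi
  have hθi : θ i = Real.arctan 8 - d / 2 ^ (i - 1) := hform i hi
  have hnext : θ i + d / 2 ^ i = Real.arctan 8 - d / 2 ^ i := by
    rw [hθi]
    have h1 : (2:ℝ) ^ i = 2 * 2 ^ (i - 1) := by
      rw [← pow_succ']
      congr 1
      omega
    rw [h1]
    have : (2:ℝ) ^ (i - 1) ≠ 0 := by positivity
    field_simp
    ring
  have hub : ∀ j : ℕ, Real.arctan 1 ≤ Real.arctan 8 - d / 2 ^ j := by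
    intro j
    have h2 : (1:ℝ) ≤ 2 ^ j := one_le_pow₀ (by norm_num)
    have : d / 2 ^ j ≤ d := by
      rw [div_le_iff₀ (by positivity)]
      nlinarith
    simp only [hd] at this ⊢
    linarith
  have hlt : ∀ j : ℕ, Real.arctan 8 - d / 2 ^ j < π / 2 := by
    intro j
    have := Real.arctan_lt_pi_div_two 8
    have : 0 < d / 2 ^ j := by positivity
    have := Real.arctan_lt_pi_div_two 8
    linarith
  have ht1 : 1 ≤ Real.tan (θ i) := by
    rw [hθi]; exact one_le_tan_aux (hub _) (hlt _)
  have ht2 : 1 ≤ Real.tan (θ i + d / 2 ^ i) := by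
    rw [hnext]; exact one_le_tan_aux (hub _) (hlt _)
  have hden : (3:ℝ) ≤ 2 * Real.tan (θ i + d / 2 ^ i) + Real.tan (θ i) := by
    linarith
  have hdenpos : (0:ℝ) < 2 * Real.tan (θ i + d / 2 ^ i) + Real.tan (θ i) := by
    linarith
  have : (3 / 2 : ℝ) * (1 / (2 * Real.tan (θ i + d / 2 ^ i) + Real.tan (θ i))) < 1 := by
    rw [mul_one_div, div_lt_one hdenpos]
    linarith
  linarith
end

section
/- For all i ∈ ℕ, the quantity δ⁽ⁱ⁾ := (1/2)·(tan(θᵢ + φᵢ) - tan(θᵢ))/(2·tan(θᵢ + φᵢ) + tan(θᵢ)) satisfies 0 < δ⁽ⁱ⁾ ≤ 7/32, where θ₁ = arctan(1), φᵢ = (arctan(8) - arctan(1))/2ⁱ, and θᵢ₊₁ = θᵢ + φᵢ. -/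
theorem stmt_1 (θ : ℕ → ℝ)
    (hθ1 : θ 1 = Real.arctan 1)
    (hrec : ∀ i : ℕ, 1 ≤ i →
      θ (i + 1) = θ i + (Real.arctan 8 - Real.arctan 1) / 2 ^ i) :
    ∀ i : ℕ, 1 ≤ i →
      0 < (1 / 2) * (Real.tan (θ i + (Real.arctan 8 - Real.arctan 1) / 2 ^ i)
            - Real.tan (θ i)) /
          (2 * Real.tan (θ i + (Real.arctan 8 - Real.arctan 1) / 2 ^ i)
            + Real.tan (θ i)) ∧
      (1 / 2) * (Real.tan (θ i + (Real.arctan 8 - Real.arctan 1) / 2 ^ i)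
            - Real.tan (θ i)) /
          (2 * Real.tan (θ i + (Real.arctan 8 - Real.arctan 1) / 2 ^ i)
            + Real.tan (θ i)) ≤ 7 / 32 := by
  set Δ : ℝ := Real.arctan 8 - Real.arctan 1 with hΔdef
  have hΔpos : 0 < Δ := by
    have : Real.arctan 1 < Real.arctan 8 := Real.arctan_strictMono (by norm_num)
    linarith
  -- closed form invariant
  have key : ∀ i : ℕ, 1 ≤ i → θ i + 2 * Δ / 2 ^ i = Real.arctan 8 := by
    intro i hi
    induction i with
    | zero => omega
    | succ n ih =>
      rcases Nat.eq_or_lt_of_le hi with h | h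
      · have : n = 0 := by omega
        subst this
        show θ 1 + 2 * Δ / 2 ^ 1 = Real.arctan 8
        rw [hθ1]
        simp only [hΔdef, pow_one]
        ring
      · have hn : 1 ≤ n := by omega
        have := ih hn
        rw [hrec n hn]
        have h2 : 2 * Δ / 2 ^ (n+1) = Δ / 2 ^ n := by
          rw [pow_succ]
          field_simp
        rw [h2]
        have h3 : 2 * Δ / 2 ^ n = Δ / 2 ^ n + Δ / 2 ^ n := by ring
        linarith
  intro i hi
  have hkey := key i hi
  have h2i : (1:ℝ) ≤ 2 ^ i / 2 := by
    have : (2:ℝ) ≤ 2 ^ i := by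
      calc (2:ℝ) = 2 ^ 1 := by norm_num
      _ ≤ 2 ^ i := by exact pow_le_pow_right₀ (by norm_num) hi
    linarith
  have h2ip : (0:ℝ) < 2 ^ i := by positivity
  have hθlb : Real.arctan 1 ≤ θ i := by
    have : 2 * Δ / 2 ^ i ≤ Δ := by
      rw [div_le_iff₀ h2ip]
      nlinarith
    have := hkey
    simp only [hΔdef] at *
    linarith
  have hφpos : 0 < Δ / 2 ^ i := by positivity
  have hub : θ i + Δ / 2 ^ i < Real.arctan 8 := by
    have : Δ / 2 ^ i < 2 * Δ / 2 ^ i := by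
      rw [div_lt_div_iff₀ h2ip h2ip]
      nlinarith
    linarith
  -- bounds on angles
  have harctan1_nonneg : (0:ℝ) ≤ Real.arctan 1 := by rw [Real.arctan_one]; positivity
  have harctan8_lt : Real.arctan 8 < Real.pi / 2 := Real.arctan_lt_pi_div_two 8
  have hx0 : 0 ≤ θ i := le_trans harctan1_nonneg hθlb
  have hy_lt : θ i + Δ / 2 ^ i < Real.pi / 2 := lt_trans hub harctan8_lt
  have hx_lt : θ i < Real.pi / 2 := by linarith
  -- tan bounds
  have hmono : Real.tan (θ i) < Real.tan (θ i + Δ / 2 ^ i) :=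
    Real.tan_lt_tan_of_nonneg_of_lt_pi_div_two hx0 hy_lt (by linarith)
  have ha1 : (1:ℝ) ≤ Real.tan (θ i) := by
    rcases eq_or_lt_of_le hθlb with h | h
    · rw [← h, Real.tan_arctan]
    · have := Real.tan_lt_tan_of_nonneg_of_lt_pi_div_two harctan1_nonneg hx_lt h
      rw [Real.tan_arctan] at this
      linarith
  have hb8 : Real.tan (θ i + Δ / 2 ^ i) < 8 := by
    have := Real.tan_lt_tan_of_nonneg_of_lt_pi_div_two
      (le_trans hx0 (by linarith : θ i ≤ θ i + Δ / 2 ^ i))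
      harctan8_lt hub
    rwa [Real.tan_arctan] at this
  set a := Real.tan (θ i)
  set b := Real.tan (θ i + Δ / 2 ^ i)
  have hdenom : 0 < 2 * b + a := by nlinarith
  constructor
  · apply div_pos
    · nlinarith
    · exact hdenom
  · rw [div_le_iff₀ hdenom]
    nlinarith
end

section
/- For any nonzero w ∈ ℝᵈ and μ > 0, the function φ(x) = -σ_μ(⟨w/‖w‖, x + w⟩ - (1/2)‖x + w‖) is differentiable at x = -w with gradient zero. More precisely, limsup over v → 0 of |φ(-w + v) - φ(-w)|/‖v‖ = 0. -/
open RealInnerProductSpace Filter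

theorem stmt_7 {d : ℕ} (μ : ℝ) (hμ : 0 < μ) (σ : ℝ → ℝ)
    (h0 : ∀ z : ℝ, z ≤ 0 → σ z = 0)
    (h1 : ∀ z : ℝ, 0 < z → z ≤ μ → σ z = z ^ 2 / (8 * μ))
    (h2 : ∀ z : ℝ, μ < z → σ z = z / 4 - μ / 8)
    (w : EuclideanSpace ℝ (Fin d)) (hw : w ≠ 0)
    (φ : EuclideanSpace ℝ (Fin d) → ℝ)
    (hφ : ∀ x, φ x = -σ (⟪(‖w‖)⁻¹ • w, x + w⟫ - (1 / 2) * ‖x + w‖)) :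
    HasFDerivAt φ (0 : EuclideanSpace ℝ (Fin d) →L[ℝ] ℝ) (-w) ∧
    Tendsto (fun v : EuclideanSpace ℝ (Fin d) => |φ (-w + v) - φ (-w)| / ‖v‖)
      (nhdsWithin 0 {0}ᶜ) (nhds 0) := by
  have hu : ‖(‖w‖)⁻¹ • w‖ = 1 := norm_smul_inv_norm hw
  have hσ : ∀ z : ℝ, z ≤ μ → |σ z| ≤ z ^ 2 / (8 * μ) := by
    intro z hz
    rcases le_or_gt z 0 with h | h
    · rw [h0 z h]; simp; positivity
    · rw [h1 z h hz, abs_of_nonneg (by positivity)]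
  have hφ0 : φ (-w) = 0 := by
    rw [hφ]
    simp [h0 0 le_rfl]
  have key : ∀ x : EuclideanSpace ℝ (Fin d), ‖x + w‖ ≤ 2 / 3 * μ →
      |φ x| ≤ 9 / (32 * μ) * ‖x + w‖ ^ 2 := by
    intro x hx
    rw [hφ, abs_neg]
    set z : ℝ := ⟪(‖w‖)⁻¹ • w, x + w⟫ - (1 / 2) * ‖x + w‖ with hzdef
    have hz1 : |z| ≤ 3 / 2 * ‖x + w‖ := by
      have h1' : |⟪(‖w‖)⁻¹ • w, x + w⟫| ≤ ‖x + w‖ := by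
        calc |⟪(‖w‖)⁻¹ • w, x + w⟫| ≤ ‖(‖w‖)⁻¹ • w‖ * ‖x + w‖ :=
              abs_real_inner_le_norm _ _
          _ = ‖x + w‖ := by rw [hu, one_mul]
      calc |z| ≤ |⟪(‖w‖)⁻¹ • w, x + w⟫| + |(1 / 2) * ‖x + w‖| := abs_sub _ _
        _ ≤ ‖x + w‖ + (1 / 2) * ‖x + w‖ := by
            refine add_le_add h1' ?_
            rw [abs_of_nonneg (by positivity)]
        _ = 3 / 2 * ‖x + w‖ := by ring
    have hzμ : z ≤ μ := by
      have := le_abs_self z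
      nlinarith
    calc |σ z| ≤ z ^ 2 / (8 * μ) := hσ z hzμ
      _ ≤ (3 / 2 * ‖x + w‖) ^ 2 / (8 * μ) := by
          have : z ^ 2 ≤ (3 / 2 * ‖x + w‖) ^ 2 := by
            rw [← sq_abs z]
            exact pow_le_pow_left₀ (abs_nonneg z) hz1 2
          exact div_le_div_of_nonneg_right this (by positivity) |>.trans_eq rfl
      _ = 9 / (32 * μ) * ‖x + w‖ ^ 2 := by field_simp; ring
  have hlo : (fun h : EuclideanSpace ℝ (Fin d) => φ (-w + h) - φ (-w)) =o[nhds 0]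
      (fun h : EuclideanSpace ℝ (Fin d) => h) := by
    rw [Asymptotics.isLittleO_iff]
    intro c hc
    rw [Metric.eventually_nhds_iff]
    refine ⟨min (2 / 3 * μ) (32 * μ * c / 9), by positivity, fun v hv => ?_⟩
    rw [dist_zero_right] at hv
    have hvw : -w + v + w = v := by abel
    have h1' : ‖v‖ ≤ 2 / 3 * μ := le_of_lt (hv.trans_le (min_le_left _ _))
    have h2' : ‖v‖ ≤ 32 * μ * c / 9 := le_of_lt (hv.trans_le (min_le_right _ _))
    have hk := key (-w + v) (by rwa [hvw])
    rw [hvw] at hk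
    rw [hφ0, sub_zero, Real.norm_eq_abs]
    calc |φ (-w + v)| ≤ 9 / (32 * μ) * ‖v‖ ^ 2 := hk
      _ ≤ c * ‖v‖ := by
          have hn : (0:ℝ) ≤ ‖v‖ := norm_nonneg v
          have step : 9 / (32 * μ) * ‖v‖ ^ 2 ≤ 9 / (32 * μ) * (32 * μ * c / 9 * ‖v‖) := by
            refine mul_le_mul_of_nonneg_left ?_ (by positivity)
            nlinarith
          have : 9 / (32 * μ) * (32 * μ * c / 9 * ‖v‖) = c * ‖v‖ := by
            field_simp
          linarith
  constructor
  · rw [hasFDerivAt_iff_isLittleO_nhds_zero]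
    simpa using hlo
  · have hlo2 : (fun v : EuclideanSpace ℝ (Fin d) => |φ (-w + v) - φ (-w)|)
        =o[nhdsWithin 0 {0}ᶜ] (fun v : EuclideanSpace ℝ (Fin d) => ‖v‖) :=
      ((hlo.abs_left).norm_right).mono nhdsWithin_le_nhds
    exact hlo2.tendsto_div_nhds_zero
end

section
/- Let w, x ∈ ℝᵈ with x ≠ 0, ⟨w, x⟩ ≤ 0, ‖w‖ = 1000μ for some μ > 0, and ‖x + w‖ ≤ 10μ. Then -⟨w/‖w‖, x/‖x‖⟩ ≥ √(1 - 100μ²/‖w‖²), and in particular -⟨w/‖w‖, x/‖x‖⟩ ≥ √(1 - 1/10000). -/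
open RealInnerProductSpace

theorem stmt_9 {d : ℕ} (μ : ℝ) (hμ : 0 < μ)
    (w x : EuclideanSpace ℝ (Fin d)) (hx : x ≠ 0)
    (hwx : ⟪w, x⟫ ≤ 0) (hwn : ‖w‖ = 1000 * μ) (hxw : ‖x + w‖ ≤ 10 * μ) :
    Real.sqrt (1 - 100 * μ ^ 2 / ‖w‖ ^ 2) ≤
      -⟪(‖w‖)⁻¹ • w, (‖x‖)⁻¹ • x⟫ ∧
    Real.sqrt (1 - 1 / 10000) ≤ -⟪(‖w‖)⁻¹ • w, (‖x‖)⁻¹ • x⟫ := by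
  have hb : (0:ℝ) < ‖w‖ := by rw [hwn]; positivity
  have ha : (0:ℝ) < ‖x‖ := norm_pos_iff.mpr hx
  have key : ‖x + w‖^2 = ‖x‖^2 + 2*⟪w,x⟫ + ‖w‖^2 := by
    rw [norm_add_sq_real, real_inner_comm]
  have h1 : ‖x‖^2 + 2*⟪w,x⟫ + ‖w‖^2 ≤ 100*μ^2 := by
    have : ‖x + w‖^2 ≤ (10*μ)^2 := by
      nlinarith [norm_nonneg (x+w)]
    nlinarith [key]
  have hinner : ⟪(‖w‖)⁻¹ • w, (‖x‖)⁻¹ • x⟫ = (‖w‖)⁻¹ * ((‖x‖)⁻¹ * ⟪w,x⟫) := by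
    rw [real_inner_smul_left, real_inner_smul_right]
  have hc0 : 0 ≤ -⟪w,x⟫ := by linarith
  have hsq : (1 - 1/10000 : ℝ) * (‖w‖^2 * ‖x‖^2) ≤ (-⟪w,x⟫)^2 := by
    have hb2 : ‖w‖^2 = 1000000 * μ^2 := by rw [hwn]; ring
    nlinarith [sq_nonneg (‖x‖^2 - (9999/10000)*‖w‖^2), hc0, h1]
  have hmain : Real.sqrt (1 - 1/10000) ≤ -⟪(‖w‖)⁻¹ • w, (‖x‖)⁻¹ • x⟫ := by
    rw [hinner]
    have heq : -((‖w‖)⁻¹ * ((‖x‖)⁻¹ * ⟪w,x⟫)) = (-⟪w,x⟫) / (‖w‖ * ‖x‖) := by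
      field_simp
    rw [heq]
    have hnn : 0 ≤ (-⟪w,x⟫) / (‖w‖ * ‖x‖) := by positivity
    have h2 : (1 - 1/10000 : ℝ) ≤ ((-⟪w,x⟫) / (‖w‖ * ‖x‖))^2 := by
      rw [div_pow]
      rw [le_div_iff₀ (by positivity)]
      nlinarith [hsq]
    calc Real.sqrt (1 - 1/10000) ≤ Real.sqrt (((-⟪w,x⟫) / (‖w‖ * ‖x‖))^2) :=
          Real.sqrt_le_sqrt h2
      _ = (-⟪w,x⟫) / (‖w‖ * ‖x‖) := Real.sqrt_sq hnn
  constructor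
  · have : (1 - 100 * μ ^ 2 / ‖w‖ ^ 2 : ℝ) = 1 - 1/10000 := by
      rw [hwn]; field_simp; ring
    rw [this]; exact hmain
  · exact hmain
end

section
/- Let f : ℝᵈ → ℝ be continuously differentiable and suppose that for some x ∈ ℝᵈ and constants c_δ > 0, c_ε > 0, every point z in the closed ball B(x, c_δ) satisfies ‖∇f(z)‖ > c_ε. Then for every δ with 0 < δ ≤ c_δ, the minimum of f over B(x, δ) satisfies min_{z ∈ B(x,δ)} f(z) < f(x) - δ·c_ε. -/
open Metric Set

theorem stmt_11 {d : ℕ} (f : EuclideanSpace ℝ (Fin d) → ℝ)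
    (hf : ContDiff ℝ 1 f)
    (x : EuclideanSpace ℝ (Fin d)) (cδ cε : ℝ) (hcδ : 0 < cδ) (hcε : 0 < cε)
    (hstat : ∀ z ∈ Metric.closedBall x cδ, cε < ‖gradient f z‖) :
    ∀ δ : ℝ, 0 < δ → δ ≤ cδ →
      ∃ z ∈ Metric.closedBall x δ, f z < f x - δ * cε := by
  intro δ hδ hδcδ
  have hfd : Differentiable ℝ f := hf.differentiable one_ne_zero
  have hgradcont : Continuous fun z => gradient f z := by
    have h1 : Continuous fun z => fderiv ℝ f z := hf.continuous_fderiv one_ne_zero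
    exact (InnerProductSpace.toDual ℝ (EuclideanSpace ℝ (Fin d))).symm.continuous.comp h1
  have hK : IsCompact (closedBall x cδ) := isCompact_closedBall x cδ
  obtain ⟨z0, hz0K, hz0min⟩ := hK.exists_isMinOn ⟨x, mem_closedBall_self hcδ.le⟩
    (continuous_norm.comp hgradcont).continuousOn
  set m := ‖gradient f z0‖ with hm
  have hmcε : cε < m := hstat z0 hz0K
  set ε' := (cε + m) / 2 with hε'
  have hε'pos : 0 < ε' := by positivity
  have hε'lt : cε < ε' := by rw [hε']; linarith
  have hε'ltm : ε' < m := by rw [hε']; linarith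
  have hlow : ∀ z ∈ closedBall x cδ, ε' < ‖gradient f z‖ :=
    fun z hz => lt_of_lt_of_le hε'ltm (hz0min hz)
  set S : Set (ℝ × EuclideanSpace ℝ (Fin d)) :=
    {p | p.1 ∈ Icc 0 δ ∧ dist p.2 x ≤ p.1 ∧ f p.2 ≤ f x - p.1 * ε'} with hS
  have hSclosed : IsClosed S := by
    apply IsClosed.inter
    · exact isClosed_Icc.preimage continuous_fst
    apply IsClosed.inter
    · exact isClosed_le (by fun_prop) continuous_fst
    · exact isClosed_le (hf.continuous.comp continuous_snd) (by fun_prop)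
  have hScompact : IsCompact S := by
    apply IsCompact.of_isClosed_subset ((isCompact_Icc).prod (isCompact_closedBall x δ))
      hSclosed
    rintro ⟨t, z⟩ ⟨ht, hz, -⟩
    exact ⟨ht, mem_closedBall.mpr (hz.trans ht.2)⟩
  set T : Set ℝ := Prod.fst '' S with hT
  have hTcompact : IsCompact T := hScompact.image continuous_fst
  have hTne : T.Nonempty := ⟨0, ⟨0, x⟩, ⟨⟨le_rfl, hδ.le⟩, by simp, by simp⟩, rfl⟩
  have hsup := hTcompact.sSup_mem hTne
  set t := sSup T with htdef
  obtain ⟨⟨t, z⟩, ⟨htIcc, hzt, hfz⟩, ht⟩ := hsup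
  dsimp only at htIcc hzt hfz ht
  subst ht
  by_cases hlt : t < δ
  · exfalso
    have hzK : z ∈ closedBall x cδ := mem_closedBall.mpr (hzt.trans (htIcc.2.trans hδcδ))
    set g := gradient f z with hg
    have hgnorm : ε' < ‖g‖ := hlow z hzK
    have hgne : g ≠ 0 := by
      intro h; rw [h] at hgnorm; simp at hgnorm; linarith
    set u : EuclideanSpace ℝ (Fin d) := -(‖g‖⁻¹ • g) with hu
    have hunorm : ‖u‖ = 1 := by
      rw [hu, norm_neg, norm_smul, norm_inv, norm_norm,
        inv_mul_cancel₀ (norm_ne_zero_iff.mpr hgne)]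
    have hcurve : HasDerivAt (fun s : ℝ => z + s • u) u 0 := by
      simpa using ((hasDerivAt_id (0:ℝ)).smul_const u).const_add z
    have hfderiv : HasDerivAt (fun s : ℝ => f (z + s • u)) (-‖g‖) 0 := by
      have h1 : HasFDerivAt f (InnerProductSpace.toDual ℝ (EuclideanSpace ℝ (Fin d)) g) z :=
        (hfd z).hasGradientAt
      have h1' : HasFDerivAt f (InnerProductSpace.toDual ℝ (EuclideanSpace ℝ (Fin d)) g)
          ((fun s : ℝ => z + s • u) 0) := by simpa using h1
      have h2 : HasDerivAt (fun s : ℝ => f (z + s • u)) _ 0 := h1'.comp_hasDerivAt 0 hcurve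
      convert h2 using 1
      simp only [InnerProductSpace.toDual_apply_apply, hu, inner_neg_right, inner_smul_right,
        real_inner_self_eq_norm_sq]
      rw [sq, inv_mul_cancel_left₀ (norm_ne_zero_iff.mpr hgne)]
    have hderivlt : -‖g‖ < -ε' := by linarith
    have hev : ∀ᶠ s in nhdsWithin (0:ℝ) (Ioi 0), f (z + s • u) < f z - s * ε' := by
      have htend := hfderiv.hasDerivWithinAt (s := Ioi (0:ℝ))
      have hsl := htend.limsup_slope_le hderivlt
      rw [Set.diff_singleton_eq_self (by simp)] at hsl
      filter_upwards [hsl, self_mem_nhdsWithin] with s hs hs0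
      rw [mem_Ioi] at hs0
      rw [slope_def_field, div_lt_iff₀ (by simpa using hs0)] at hs
      simp only [zero_smul, add_zero, sub_zero] at hs
      nlinarith
    have hev2 : ∀ᶠ s in nhdsWithin (0:ℝ) (Ioi 0), s < δ - t :=
      eventually_nhdsWithin_of_eventually_nhds
        (Filter.Tendsto.eventually_lt_const (by linarith) Filter.tendsto_id)
    obtain ⟨s, ⟨hsf, hsδ⟩, hs2'⟩ := ((hev.and hev2).and self_mem_nhdsWithin).exists
    have hs2 : 0 < s := hs2'
    have hmem : t + s ∈ T := by
      refine ⟨⟨t + s, z + s • u⟩, ⟨⟨show (0:ℝ) ≤ t + s by linarith [htIcc.1], show t + s ≤ δ by linarith⟩, ?_, ?_⟩, rfl⟩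
      · calc dist (z + s • u) x ≤ dist (z + s • u) z + dist z x := dist_triangle _ _ _
          _ ≤ s + t := by
              rw [dist_comm, dist_self_add_right, norm_smul, hunorm, Real.norm_eq_abs,
                abs_of_pos hs2]; simpa using hzt
          _ = t + s := by ring
      · dsimp only
        nlinarith
    have := le_csSup hTcompact.bddAbove hmem
    rw [← htdef] at this
    linarith
  · push_neg at hlt
    have htδ : t = δ := le_antisymm htIcc.2 hlt
    rw [htδ] at hzt hfz
    refine ⟨z, mem_closedBall.mpr hzt, ?_⟩
    have hlt2 : δ * cε < δ * ε' := mul_lt_mul_of_pos_left hε'lt hδ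
    linarith
end

section
/- For all i ∈ ℕ, the product of slopes satisfies ∏_{j=1}^i δ⁽ʲ⁾ · (1/2 - 2δ⁽ⁱ⁺¹⁾) ≥ (arctan(8) - arctan(1))ⁱ / 2^{2i²+4}, where δ⁽ʲ⁾ = (1/2)(tan(θⱼ₊₁) - tan(θⱼ))/(2tan(θⱼ₊₁) + tan(θⱼ)) and θ₁ = arctan(1), θⱼ₊₁ = θⱼ + (arctan(8)-arctan(1))/2ʲ. -/
/-!
Writing `D = arctan 8 - arctan 1`, the angles are `θ (j + 1) = arctan 8 - D / 2 ^ j`, so all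
tangents lie in `[1, 8]`. The subtraction formula `tan b - tan a = tan (b - a) (1 + tan a tan b)`
and `tan x ≥ x` give `δ j ≥ D / 2 ^ (j + 2)`, while `δ j ≤ 7 / 34` because `δ` only depends
on the ratio of the two tangents. Hence `∏_{j ≤ i} δ j ≥ (D / 2 ^ (i + 2)) ^ i`, which beats
`D ^ i / 2 ^ (2 i²)` once `i ≥ 2`; for `i = 1` the sharper bound `tan (θ 2) ≥ 5 / 3` controls
`δ 2`.
-/

open Real Set

lemma Real.tan_sub_tan_eq {x y : ℝ} (hx : cos x ≠ 0) (hy : cos y ≠ 0)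
    (hxy : 1 + tan x * tan y ≠ 0) :
    tan x - tan y = tan (x - y) * (1 + tan x * tan y) := by
  rw [tan_sub' ⟨cos_ne_zero_iff.mp hx, cos_ne_zero_iff.mp hy⟩, div_mul_cancel₀ _ hxy]

lemma Real.tan_mem_Icc_of_mem_Icc_arctan {a b x : ℝ} (hx : x ∈ Icc (arctan a) (arctan b)) :
    tan x ∈ Icc a b := by
  have hx' : x ∈ Ioo (-(π / 2)) (π / 2) :=
    ⟨(arctan_mem_Ioo a).1.trans_le hx.1, hx.2.trans_lt (arctan_mem_Ioo b).2⟩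
  constructor
  · simpa only [tan_arctan] using strictMonoOn_tan.monotoneOn (arctan_mem_Ioo a) hx' hx.1
  · simpa only [tan_arctan] using strictMonoOn_tan.monotoneOn hx' (arctan_mem_Ioo b) hx.2

lemma arctan_eight_sub_arctan_one_lt_pi_div_two : arctan 8 - arctan 1 < π / 2 := by
  have := arctan_lt_pi_div_two 8
  have : 0 < arctan 1 := arctan_pos.mpr one_pos
  linarith

lemma one_half_lt_arctan_eight_sub_arctan_one : 1 / 2 < arctan 8 - arctan 1 := by
  have hinv : arctan (8⁻¹ : ℝ) ≤ 8⁻¹ := by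
    simpa only [tan_arctan] using
      le_tan (arctan_nonneg.mpr (by norm_num)) (arctan_lt_pi_div_two _)
  have := arctan_inv_of_pos (show (0 : ℝ) < 8 by norm_num)
  linarith [arctan_one, pi_gt_three]

/-- The ratio `δ` of the statement, as a function of `t = tan θⱼ` and `t' = tan θⱼ₊₁`. -/
noncomputable def stepSlope (t t' : ℝ) : ℝ := 1 / 2 * (t' - t) / (2 * t' + t)

lemma div_four_le_stepSlope {s t t' : ℝ} (hs : 0 ≤ s) (ht : 1 ≤ t) (ht' : 1 ≤ t')
    (hstep : t' - t = s * (1 + t * t')) : s / 4 ≤ stepSlope t t' := by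
  rw [stepSlope, le_div_iff₀ (by linarith), hstep]
  have hcross : 0 ≤ (t - 1) * (2 * t' - 1) := mul_nonneg (by linarith) (by linarith)
  nlinarith [mul_nonneg hs hcross]

lemma stepSlope_le_of_le_mul {t t' r : ℝ} (ht : 0 < t) (ht' : 0 ≤ t') (hr : 0 ≤ r)
    (h : t' ≤ r * t) : stepSlope t t' ≤ (r - 1) / (2 * (2 * r + 1)) := by
  rw [stepSlope, div_le_div_iff₀ (by linarith) (by linarith)]
  nlinarith

lemma pow_le_prod_Icc {f : ℕ → ℝ} {c : ℝ} {n : ℕ} (hc : 0 ≤ c)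
    (h : ∀ j, 1 ≤ j → j ≤ n → c ≤ f j) : c ^ n ≤ ∏ j ∈ Finset.Icc 1 n, f j := by
  have := Finset.prod_le_prod (fun _ _ => hc) fun j hj =>
    h j (Finset.mem_Icc.mp hj).1 (Finset.mem_Icc.mp hj).2
  rwa [Finset.prod_const, Nat.card_Icc, Nat.add_sub_cancel] at this

section Angles

variable {θ : ℕ → ℝ}

lemma theta_succ_eq (hθ1 : θ 1 = arctan 1)
    (hrec : ∀ j : ℕ, 1 ≤ j → θ (j + 1) = θ j + (arctan 8 - arctan 1) / 2 ^ j) (j : ℕ) :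
    θ (j + 1) = arctan 8 - (arctan 8 - arctan 1) / 2 ^ j := by
  induction j with
  | zero => rw [hθ1]; ring
  | succ j ih => rw [hrec (j + 1) (by omega), ih, pow_succ]; ring

lemma tan_theta_mem_Icc (hθ1 : θ 1 = arctan 1)
    (hrec : ∀ j : ℕ, 1 ≤ j → θ (j + 1) = θ j + (arctan 8 - arctan 1) / 2 ^ j) {j : ℕ}
    (hj : 1 ≤ j) : tan (θ j) ∈ Icc 1 8 := by
  obtain ⟨k, rfl⟩ := Nat.exists_eq_add_of_le' hj
  apply tan_mem_Icc_of_mem_Icc_arctan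
  have hD : 0 < arctan 8 - arctan 1 := by linarith [one_half_lt_arctan_eight_sub_arctan_one]
  have hle : (arctan 8 - arctan 1) / 2 ^ k ≤ arctan 8 - arctan 1 :=
    div_le_self hD.le (one_le_pow₀ one_le_two)
  rw [theta_succ_eq hθ1 hrec]
  constructor <;> linarith [div_pos hD (pow_pos two_pos k)]

lemma tan_theta_succ_sub_tan_theta (hθ1 : θ 1 = arctan 1)
    (hrec : ∀ j : ℕ, 1 ≤ j → θ (j + 1) = θ j + (arctan 8 - arctan 1) / 2 ^ j) {j : ℕ}
    (hj : 1 ≤ j) :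
    tan (θ (j + 1)) - tan (θ j) =
      tan ((arctan 8 - arctan 1) / 2 ^ j) * (1 + tan (θ (j + 1)) * tan (θ j)) := by
  have hcos : ∀ x, tan x ∈ Icc (1 : ℝ) 8 → cos x ≠ 0 := fun x hx h0 => by
    have := hx.1
    rw [tan_eq_sin_div_cos, h0, div_zero] at this
    norm_num at this
  have ht := tan_theta_mem_Icc hθ1 hrec hj
  have ht' := tan_theta_mem_Icc hθ1 hrec (Nat.le_succ_of_le hj)
  rw [tan_sub_tan_eq (hcos _ ht') (hcos _ ht) (by nlinarith [ht.1, ht'.1]), hrec j hj,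
    add_sub_cancel_left]

lemma five_thirds_le_tan_theta_two (hθ1 : θ 1 = arctan 1)
    (hrec : ∀ j : ℕ, 1 ≤ j → θ (j + 1) = θ j + (arctan 8 - arctan 1) / 2 ^ j) :
    5 / 3 ≤ tan (θ 2) := by
  have hstep := tan_theta_succ_sub_tan_theta hθ1 hrec le_rfl
  have hD := one_half_lt_arctan_eight_sub_arctan_one
  have hs : (arctan 8 - arctan 1) / 2 ^ 1 ≤ tan ((arctan 8 - arctan 1) / 2 ^ 1) :=
    le_tan (by linarith) (by linarith [arctan_eight_sub_arctan_one_lt_pi_div_two])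
  have ht := (tan_theta_mem_Icc hθ1 hrec (j := 2) (by norm_num)).1
  rw [hθ1, tan_arctan, mul_one] at hstep
  nlinarith

variable {δ : ℕ → ℝ}

lemma div_pow_add_two_le_delta (hθ1 : θ 1 = arctan 1)
    (hrec : ∀ j : ℕ, 1 ≤ j → θ (j + 1) = θ j + (arctan 8 - arctan 1) / 2 ^ j)
    (hδ : ∀ j, δ j = stepSlope (tan (θ j)) (tan (θ (j + 1))))
    {j : ℕ} (hj : 1 ≤ j) : (arctan 8 - arctan 1) / 2 ^ (j + 2) ≤ δ j := by
  have hD := one_half_lt_arctan_eight_sub_arctan_one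
  have hs0 : 0 ≤ (arctan 8 - arctan 1) / 2 ^ j := by positivity
  have hs : (arctan 8 - arctan 1) / 2 ^ j ≤ tan ((arctan 8 - arctan 1) / 2 ^ j) :=
    le_tan hs0 ((div_le_self (by linarith) (one_le_pow₀ one_le_two)).trans_lt
      arctan_eight_sub_arctan_one_lt_pi_div_two)
  have ht := tan_theta_mem_Icc hθ1 hrec hj
  have ht' := tan_theta_mem_Icc hθ1 hrec (Nat.le_succ_of_le hj)
  have hslope := div_four_le_stepSlope (hs0.trans hs) ht.1 ht'.1
    (by rw [tan_theta_succ_sub_tan_theta hθ1 hrec hj, mul_comm (tan (θ j))])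
  rw [hδ j]
  calc (arctan 8 - arctan 1) / 2 ^ (j + 2) = (arctan 8 - arctan 1) / 2 ^ j / 4 := by
        rw [pow_add, div_div]; norm_num
    _ ≤ _ := by linarith

lemma delta_le (hθ1 : θ 1 = arctan 1)
    (hrec : ∀ j : ℕ, 1 ≤ j → θ (j + 1) = θ j + (arctan 8 - arctan 1) / 2 ^ j)
    (hδ : ∀ j, δ j = stepSlope (tan (θ j)) (tan (θ (j + 1))))
    {j : ℕ} (hj : 1 ≤ j) : δ j ≤ 7 / 34 := by
  have ht := tan_theta_mem_Icc hθ1 hrec hj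
  have ht' := tan_theta_mem_Icc hθ1 hrec (Nat.le_succ_of_le hj)
  rw [hδ j]
  exact (stepSlope_le_of_le_mul (r := 8) (by linarith [ht.1]) (by linarith [ht'.1]) (by norm_num)
    (by linarith [ht.1, ht'.2])).trans_eq (by norm_num)

lemma delta_two_le (hθ1 : θ 1 = arctan 1)
    (hrec : ∀ j : ℕ, 1 ≤ j → θ (j + 1) = θ j + (arctan 8 - arctan 1) / 2 ^ j)
    (hδ : ∀ j, δ j = stepSlope (tan (θ j)) (tan (θ (j + 1)))) :
    δ 2 ≤ 19 / 106 := by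
  have ht := five_thirds_le_tan_theta_two hθ1 hrec
  have ht' := tan_theta_mem_Icc hθ1 hrec (j := 3) (by norm_num)
  rw [hδ 2]
  exact (stepSlope_le_of_le_mul (r := 24 / 5) (by linarith) (by linarith [ht'.1]) (by norm_num)
    (by linarith [ht'.2])).trans_eq (by norm_num)

end Angles

theorem stmt_18 (θ : ℕ → ℝ)
    (hθ1 : θ 1 = Real.arctan 1)
    (hrec : ∀ j : ℕ, 1 ≤ j →
      θ (j + 1) = θ j + (Real.arctan 8 - Real.arctan 1) / 2 ^ j)
    (δ : ℕ → ℝ)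
    (hδ : ∀ j, δ j = (1 / 2) * (Real.tan (θ (j + 1)) - Real.tan (θ j)) /
      (2 * Real.tan (θ (j + 1)) + Real.tan (θ j))) :
    ∀ i : ℕ, 1 ≤ i →
      (Real.arctan 8 - Real.arctan 1) ^ i / 2 ^ (2 * i ^ 2 + 4) ≤
        (∏ j ∈ Finset.Icc 1 i, δ j) * (1 / 2 - 2 * δ (i + 1)) := by
  intro i hi
  set D := Real.arctan 8 - Real.arctan 1
  have hD : 0 < D := by linarith [one_half_lt_arctan_eight_sub_arctan_one]
  have hlow : ∀ j, 1 ≤ j → D / 2 ^ (j + 2) ≤ δ j := fun j hj =>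
    div_pow_add_two_le_delta hθ1 hrec hδ hj
  have hlast : 1 / 16 ≤ 1 / 2 - 2 * δ (i + 1) := by
    linarith [delta_le hθ1 hrec hδ (Nat.le_succ_of_le hi)]
  rcases hi.eq_or_lt with rfl | hi
  · have h2 := delta_two_le hθ1 hrec hδ
    rw [Finset.Icc_self, Finset.prod_singleton]
    calc D ^ 1 / 2 ^ (2 * 1 ^ 2 + 4) = D / 2 ^ (1 + 2) * (1 / 8) := by norm_num; ring
      _ ≤ δ 1 * (1 / 2 - 2 * δ (1 + 1)) :=
        mul_le_mul (hlow 1 le_rfl) (by norm_num; linarith) (by norm_num)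
          ((by positivity : (0 : ℝ) ≤ D / 2 ^ (1 + 2)).trans (hlow 1 le_rfl))
  · have hprod : (D / 2 ^ (i + 2)) ^ i ≤ ∏ j ∈ Finset.Icc 1 i, δ j :=
      pow_le_prod_Icc (by positivity) fun j hj hji =>
        (div_le_div_of_nonneg_left hD.le (by positivity)
          (pow_le_pow_right₀ one_le_two (by omega))).trans (hlow j hj)
    calc D ^ i / 2 ^ (2 * i ^ 2 + 4) ≤ D ^ i / 2 ^ ((i + 2) * i + 4) :=
          div_le_div_of_nonneg_left (by positivity) (by positivity)
            (pow_le_pow_right₀ one_le_two (by nlinarith))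
      _ = (D / 2 ^ (i + 2)) ^ i * (1 / 16) := by
          rw [div_pow, ← pow_mul, pow_add]; norm_num; ring
      _ ≤ _ :=
          mul_le_mul hprod hlast (by norm_num) ((by positivity : (0 : ℝ) ≤ _).trans hprod)
end
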